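/- arXiv:1711.02999 — 2 statements merged into one kernel-verified Lean document; each statement's English description precedes it below -/
import Mathlib

section
/- Under the Knill-Laflamme condition for the error set E = {1, F_1, ..., F_N} on the code space C = span{|W_μ⟩}, define the subspaces S_μ = span({|W_μ⟩} ∪ {F_k|W_μ⟩ : k = 1,...,N}). Then the subspaces S_μ for distinct μ are pairwise orthogonal, and all S_μ have the same dimension. -/
open scoped InnerProductSpace

/-- The rank-one operator `|x⟩⟨y|`. -/
noncomputable def ketbra {H : Type*} [NormedAddCommGroup H] [InnerProductSpace ℂ H]
    (x y : H) : H →ₗ[ℂ] H where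
  toFun v := (inner ℂ y v : ℂ) • x
  map_add' u v := by simp [inner_add_right, add_smul]
  map_smul' c v := by simp [inner_smul_right, smul_smul]

theorem stmt1 {H : Type*} [NormedAddCommGroup H] [InnerProductSpace ℂ H]
    [FiniteDimensional ℂ H] {d N : ℕ}
    (W : Fin d → H) (hW : Orthonormal ℂ W)
    (F : Fin N → (H →ₗ[ℂ] H))
    (E : Fin (N + 1) → (H →ₗ[ℂ] H))
    (hE : E = Fin.cons LinearMap.id F)
    (Pc : H →ₗ[ℂ] H) (hPc : Pc = ∑ μ, ketbra (W μ) (W μ))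
    (c : Fin (N + 1) → Fin (N + 1) → ℂ)
    (hKL : ∀ l l' : Fin (N + 1),
      Pc ∘ₗ (LinearMap.adjoint (E l')) ∘ₗ (E l) ∘ₗ Pc = c l' l • Pc)
    (S : Fin d → Submodule ℂ H)
    (hS : ∀ μ, S μ = Submodule.span ℂ ({W μ} ∪ Set.range fun k => (F k) (W μ))) :
    (∀ μ ν : Fin d, μ ≠ ν → ∀ x ∈ S μ, ∀ y ∈ S ν, ⟪x, y⟫_ℂ = 0) ∧
    (∀ μ ν : Fin d, Module.finrank ℂ (S μ) = Module.finrank ℂ (S ν)) := by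
  have hWij : ∀ i j, ⟪W i, W j⟫_ℂ = if i = j then 1 else 0 := orthonormal_iff_ite.mp hW
  have hPcapp : ∀ v : H, Pc v = ∑ κ, (⟪W κ, v⟫_ℂ) • W κ := by
    intro v; rw [hPc]; simp [LinearMap.sum_apply, ketbra]
  have hPcW : ∀ μ, Pc (W μ) = W μ := by
    intro μ
    rw [hPcapp]
    simp [hWij, ite_smul, Finset.sum_ite_eq]
  have hPcinner : ∀ (μ : Fin d) (v : H), ⟪W μ, Pc v⟫_ℂ = ⟪W μ, v⟫_ℂ := by
    intro μ v
    rw [hPcapp]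
    simp [inner_sum, inner_smul_right, hWij, mul_ite, Finset.sum_ite_eq']
  -- key inner product identity
  have hkey : ∀ (l l' : Fin (N + 1)) (μ ν : Fin d),
      ⟪E l' (W μ), E l (W ν)⟫_ℂ = c l' l * (if μ = ν then 1 else 0) := by
    intro l l' μ ν
    have h := congrArg (fun A : H →ₗ[ℂ] H => ⟪W μ, A (W ν)⟫_ℂ) (hKL l l')
    simp only [LinearMap.comp_apply, LinearMap.smul_apply] at h
    rw [hPcW, hPcinner, LinearMap.adjoint_inner_right, inner_smul_right, hWij] at h
    exact h
  -- reexpress the generators of S μ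
  set v : Fin d → Fin (N + 1) → H := fun μ l => E l (W μ) with hv
  have hSv : ∀ μ, S μ = Submodule.span ℂ (Set.range (v μ)) := by
    intro μ
    rw [hS]
    congr 1
    have : v μ = Fin.cons (W μ) (fun k => F k (W μ)) := by
      funext l
      refine Fin.cases ?_ ?_ l <;> simp [hv, hE]
    rw [this, Fin.range_cons, Set.insert_eq]
  constructor
  · intro μ ν hμν x hx y hy
    have hortho : S μ ⟂ S ν := by
      rw [hSv μ, hSv ν, Submodule.isOrtho_span]
      rintro _ ⟨l', rfl⟩ _ ⟨l, rfl⟩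
      rw [hkey, if_neg hμν, mul_zero]
    exact hortho.inner_eq hx hy
  · -- dimension claim via rank-nullity with equal kernels
    have hker : ∀ μ ν : Fin d,
        LinearMap.ker (Fintype.linearCombination ℂ (v μ)) =
        LinearMap.ker (Fintype.linearCombination ℂ (v ν)) := by
      have key : ∀ (μ ν : Fin d) (a : Fin (N + 1) → ℂ),
          Fintype.linearCombination ℂ (v μ) a = 0 →
          Fintype.linearCombination ℂ (v ν) a = 0 := by
        intro μ ν a ha
        have hnorm : ∀ κ : Fin d, ⟪Fintype.linearCombination ℂ (v κ) a,
            Fintype.linearCombination ℂ (v κ) a⟫_ℂ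
            = ∑ l', ∑ l, (starRingEnd ℂ) (a l') * a l * c l' l := by
          intro κ
          rw [Fintype.linearCombination_apply, sum_inner]
          refine Finset.sum_congr rfl fun l' _ => ?_
          rw [inner_sum]
          refine Finset.sum_congr rfl fun l _ => ?_
          rw [inner_smul_left, inner_smul_right, hkey, if_pos rfl, mul_one]
          ring
        rw [← inner_self_eq_zero (𝕜 := ℂ), hnorm, ← hnorm μ, ha, inner_zero_left]
      intro μ ν
      ext a
      simp only [LinearMap.mem_ker]
      exact ⟨key μ ν a, key ν μ a⟩
    intro μ ν
    have hrange : ∀ κ : Fin d,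
        LinearMap.range (Fintype.linearCombination ℂ (v κ)) = S κ := by
      intro κ; rw [Fintype.range_linearCombination, hSv]
    have h1 := LinearMap.finrank_range_add_finrank_ker (Fintype.linearCombination ℂ (v μ))
    have h2 := LinearMap.finrank_range_add_finrank_ker (Fintype.linearCombination ℂ (v ν))
    rw [hrange] at h1 h2
    rw [hker μ ν] at h1
    omega
end

section
/- For the binomial code engineered jump operators F_1 = (1/√2)(|0⟩ + |4⟩)⟨3| + |2⟩⟨1| and F_2 = |Φ⟩⟨0| − |Φ⟩⟨4| (with |Φ⟩ any vector orthogonal to |0⟩ − |4⟩), every density operator ρ supported on the code space C = span{(|0⟩+|4⟩)/√2, |2⟩} satisfies D(F_1)ρ + D(F_2)ρ = 0, where D(A)ρ = AρA^† − (1/2){A^†A, ρ}. -/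
open scoped InnerProductSpace

/-- The Lindblad dissipator `D(A)ρ = AρA† − (1/2)(A†Aρ + ρA†A)`. -/
noncomputable def lindbladD {H : Type*} [NormedAddCommGroup H] [InnerProductSpace ℂ H]
    [FiniteDimensional ℂ H] (A ρ : H →ₗ[ℂ] H) : H →ₗ[ℂ] H :=
  A ∘ₗ ρ ∘ₗ (LinearMap.adjoint A) -
    (2⁻¹ : ℂ) • ((LinearMap.adjoint A) ∘ₗ A ∘ₗ ρ + ρ ∘ₗ (LinearMap.adjoint A) ∘ₗ A)

/-- The truncated 5-dimensional Fock space `span{|0⟩,...,|4⟩}`. -/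
abbrev H5 : Type := EuclideanSpace ℂ (Fin 5)

/-- Fock basis vector `|n⟩`. -/
noncomputable def fock (n : Fin 5) : H5 := EuclideanSpace.single n 1

/-- Binomial code word `|W_0⟩ = (|0⟩+|4⟩)/√2`. -/
noncomputable def W0 : H5 := (Real.sqrt 2 : ℂ)⁻¹ • (fock 0 + fock 4)

/-- Binomial code word `|W_1⟩ = |2⟩`. -/
noncomputable def W1 : H5 := fock 2

/-- The corrective jump `F_1 = (1/√2)(|0⟩+|4⟩)⟨3| + |2⟩⟨1|`. -/
noncomputable def F1 : H5 →ₗ[ℂ] H5 := ketbra W0 (fock 3) + ketbra W1 (fock 1)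

/-- The preventive jump `F_2 = |Φ⟩⟨0| − |Φ⟩⟨4|`. -/
noncomputable def F2 (Φ : H5) : H5 →ₗ[ℂ] H5 := ketbra Φ (fock 0) - ketbra Φ (fock 4)


lemma ketbra_apply {H : Type*} [NormedAddCommGroup H] [InnerProductSpace ℂ H]
    (x y v : H) : ketbra x y v = (inner ℂ y v : ℂ) • x := rfl

lemma ketbra_comp {H : Type*} [NormedAddCommGroup H] [InnerProductSpace ℂ H]
    (x y z w : H) : ketbra x y ∘ₗ ketbra z w = (⟪y, z⟫_ℂ) • ketbra x w := by
  ext v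
  simp [ketbra_apply, inner_smul_right, smul_smul, mul_comm]

lemma adjoint_ketbra {H : Type*} [NormedAddCommGroup H] [InnerProductSpace ℂ H]
    [FiniteDimensional ℂ H] (x y : H) :
    LinearMap.adjoint (ketbra x y) = ketbra y x := by
  rw [eq_comm, LinearMap.eq_adjoint_iff]
  intro u v
  simp [ketbra_apply, inner_smul_left, inner_smul_right, mul_comm, inner_conj_symm]

lemma inner_fock_fock (m n : Fin 5) :
    ⟪fock m, fock n⟫_ℂ = if n = m then 1 else 0 := by
  simp [fock, EuclideanSpace.inner_single_left, EuclideanSpace.single_apply]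
  exact if_congr eq_comm rfl rfl

lemma inner_fock_W0 (m : Fin 5) :
    ⟪fock m, W0⟫_ℂ = (Real.sqrt 2 : ℂ)⁻¹ * ((if (0:Fin 5) = m then 1 else 0) + (if (4:Fin 5) = m then 1 else 0)) := by
  simp only [W0, inner_smul_right, inner_add_right, inner_fock_fock, mul_add]

lemma inner_fock_W1 (m : Fin 5) :
    ⟪fock m, W1⟫_ℂ = if (2:Fin 5) = m then 1 else 0 := by
  simp only [W1, inner_fock_fock]

lemma F1_comp (Pc : H5 →ₗ[ℂ] H5) (hPc : Pc = ketbra W0 W0 + ketbra W1 W1) :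
    F1 ∘ₗ Pc = 0 := by
  simp only [F1, hPc, LinearMap.comp_add, LinearMap.add_comp, ketbra_comp,
    inner_fock_W0, inner_fock_W1]
  simp (config := { decide := true })

lemma F2_comp (Φ : H5) (Pc : H5 →ₗ[ℂ] H5) (hPc : Pc = ketbra W0 W0 + ketbra W1 W1) :
    F2 Φ ∘ₗ Pc = 0 := by
  simp only [F2, hPc, LinearMap.comp_add, LinearMap.add_comp, LinearMap.sub_comp,
    LinearMap.comp_sub, ketbra_comp, inner_fock_W0, inner_fock_W1]
  simp (config := { decide := true })

lemma Pc_sa (Pc : H5 →ₗ[ℂ] H5) (hPc : Pc = ketbra W0 W0 + ketbra W1 W1) :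
    LinearMap.adjoint Pc = Pc := by
  simp [hPc, map_add, adjoint_ketbra]

lemma lindblad_vanish {H : Type*} [NormedAddCommGroup H] [InnerProductSpace ℂ H]
    [FiniteDimensional ℂ H] (A Pc ρ : H →ₗ[ℂ] H)
    (hA : A ∘ₗ Pc = 0) (hPc : LinearMap.adjoint Pc = Pc) :
    lindbladD A (Pc ∘ₗ ρ ∘ₗ Pc) = 0 := by
  have h2 : Pc ∘ₗ LinearMap.adjoint A = 0 := by
    have := congrArg LinearMap.adjoint hA
    rwa [LinearMap.adjoint_comp, hPc, map_zero] at this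
  unfold lindbladD
  rw [show A ∘ₗ (Pc ∘ₗ ρ ∘ₗ Pc) ∘ₗ LinearMap.adjoint A
      = (A ∘ₗ Pc) ∘ₗ ρ ∘ₗ (Pc ∘ₗ LinearMap.adjoint A) by
    simp [LinearMap.comp_assoc]]
  rw [show LinearMap.adjoint A ∘ₗ A ∘ₗ (Pc ∘ₗ ρ ∘ₗ Pc)
      = LinearMap.adjoint A ∘ₗ (A ∘ₗ Pc) ∘ₗ ρ ∘ₗ Pc by
    simp [LinearMap.comp_assoc]]
  rw [show (Pc ∘ₗ ρ ∘ₗ Pc) ∘ₗ LinearMap.adjoint A ∘ₗ A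
      = Pc ∘ₗ ρ ∘ₗ (Pc ∘ₗ LinearMap.adjoint A) ∘ₗ A by
    simp [LinearMap.comp_assoc]]
  simp [hA, h2]

/-- Every density operator supported on the binomial code space is annihilated by
the total engineered dissipator `D(F_1) + D(F_2)`. -/
theorem stmt12 (Φ : H5) (hΦ : ⟪Φ, fock 0 - fock 4⟫_ℂ = 0)
    (Pc : H5 →ₗ[ℂ] H5) (hPc : Pc = ketbra W0 W0 + ketbra W1 W1)
    (ρ : H5 →ₗ[ℂ] H5)
    (hρsym : LinearMap.IsSymmetric ρ)
    (hρpos : ∀ v : H5, 0 ≤ (⟪v, ρ v⟫_ℂ).re)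
    (hρtr : LinearMap.trace ℂ H5 ρ = 1)
    (hsupp : ρ = Pc ∘ₗ ρ ∘ₗ Pc) :
    lindbladD F1 ρ + lindbladD (F2 Φ) ρ = 0 := by
  rw [hsupp, lindblad_vanish _ _ _ (F1_comp Pc hPc) (Pc_sa Pc hPc),
    lindblad_vanish _ _ _ (F2_comp Φ Pc hPc) (Pc_sa Pc hPc), add_zero]
end
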